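/- arXiv:2202.11387 — 3 statements merged into one kernel-verified Lean document; each statement's English description precedes it below -/
import Mathlib

section
/- Let N ≥ 2 and k ∈ ℝ, and define 𝒟 on {x ∈ ℝ^N : |x| ≥ 1} by 𝒟(x) = |x|^k (1 − |x|^{2−N−k}) if k > 2 − N, 𝒟(x) = |x|^{2−N} (1 − |x|^{k−2+N}) if k < 2 − N, and 𝒟(x) = |x|^{2−N} ln|x| if k = 2 − N. Then 𝒟 is nonnegative on {|x| ≥ 1}, satisfies L_k 𝒟(x) = Δ𝒟(x) − k div(𝒟 x/|x|²)(x) = 0 for every x with |x| > 1, and 𝒟(x) = 0 for every x with |x| = 1. -/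
open MeasureTheory Metric Set Function

noncomputable section

abbrev Euc (N : ℕ) : Type := EuclideanSpace ℝ (Fin N)

/-- The Laplacian of `g : Euc N → ℝ` at `x`, as the sum of second directional derivatives
along the standard orthonormal basis. -/
def lapl (N : ℕ) (g : Euc N → ℝ) (x : Euc N) : ℝ :=
  ∑ i : Fin N, fderiv ℝ (fun y => fderiv ℝ g y (EuclideanSpace.single i 1)) x
    (EuclideanSpace.single i 1)

/-- The divergence of a vector field `V : Euc N → Euc N` at `x`. -/
def diverg {N : ℕ} (V : Euc N → Euc N) (x : Euc N) : ℝ :=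
  ∑ i : Fin N, fderiv ℝ V x (EuclideanSpace.single i 1) i

/-- The operator `L_k v = Δ v − k div(v x/|x|²)`. -/
def Lk (N : ℕ) (k : ℝ) (v : Euc N → ℝ) (x : Euc N) : ℝ :=
  lapl N v x - k * diverg (fun y => (v y / ‖y‖ ^ 2) • y) x
/-- The function `𝒟` on the exterior domain. -/
def Dfun (N : ℕ) (k : ℝ) (x : Euc N) : ℝ :=
  if 2 - (N : ℝ) < k then ‖x‖ ^ k * (1 - ‖x‖ ^ (2 - (N : ℝ) - k))
  else if k < 2 - (N : ℝ) then ‖x‖ ^ (2 - (N : ℝ)) * (1 - ‖x‖ ^ (k - 2 + (N : ℝ)))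
  else ‖x‖ ^ (2 - (N : ℝ)) * Real.log ‖x‖

/-! `𝒟` is radial, and for a radial function `f(|x|)`, writing `Δ = div ∇` and using
`div (g(|x|) x) = r g'(r) + N g(r)` (with `r = |x|`) gives
`L_k f = f'' + (N - 1 - k) f'/r - k (N - 2) f/r²`.
On `r^a` this is `(a - k)(a + N - 2) r^(a - 2)`, so `r^k` and `r^(2-N)` are `L_k`-harmonic away from
the origin, and when the two exponents coincide `r^(2-N) log r` is the second solution. -/

open Filter Topology

theorem hasFDerivAt_norm_of_ne_zero {F : Type*} [NormedAddCommGroup F] [InnerProductSpace ℝ F]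
    {x : F} (hx : x ≠ 0) : HasFDerivAt (‖·‖) (‖x‖⁻¹ • innerSL ℝ x) x := by
  have hsq := (Real.hasDerivAt_sqrt (by positivity)).comp_hasFDerivAt x
    (hasStrictFDerivAt_norm_sq x).hasFDerivAt
  simp only [Function.comp_def, Real.sqrt_sq (norm_nonneg _)] at hsq
  refine hsq.congr_fderiv ?_
  ext v
  simp
  field_simp

theorem HasDerivAt.hasGradientAt_comp_norm {F : Type*} [NormedAddCommGroup F]
    [InnerProductSpace ℝ F] [CompleteSpace F] {f : ℝ → ℝ} {f' : ℝ} {x : F}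
    (hf : HasDerivAt f f' ‖x‖) (hx : x ≠ 0) :
    HasGradientAt (fun y => f ‖y‖) ((f' / ‖x‖) • x) x := by
  refine (hf.comp_hasFDerivAt x (hasFDerivAt_norm_of_ne_zero hx)).congr_fderiv ?_
  ext v
  simp [div_eq_mul_inv]
  ring

section

variable {N : ℕ}

theorem lapl_congr {f g : Euc N → ℝ} {x : Euc N} (h : f =ᶠ[𝓝 x] g) : lapl N f x = lapl N g x := by
  refine Finset.sum_congr rfl fun i _ => ?_
  have hi : (fun y => fderiv ℝ f y (EuclideanSpace.single i 1)) =ᶠ[𝓝 x]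
      fun y => fderiv ℝ g y (EuclideanSpace.single i 1) :=
    (h.fderiv (𝕜 := ℝ)).mono fun y hy => by simp only [hy]
  rw [hi.fderiv_eq]

theorem diverg_congr {V W : Euc N → Euc N} {x : Euc N} (h : V =ᶠ[𝓝 x] W) :
    diverg V x = diverg W x := by
  simp only [diverg, h.fderiv_eq]

theorem Lk_congr (k : ℝ) {f g : Euc N → ℝ} {x : Euc N} (h : f =ᶠ[𝓝 x] g) :
    Lk N k f x = Lk N k g x := by
  have hV : (fun y => (f y / ‖y‖ ^ 2) • y) =ᶠ[𝓝 x] fun y => (g y / ‖y‖ ^ 2) • y :=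
    h.mono fun y hy => by simp only [hy]
  rw [Lk, Lk, lapl_congr h, diverg_congr hV]

theorem lapl_eq_diverg_of_hasGradientAt {g : Euc N → ℝ} {V : Euc N → Euc N} {x : Euc N}
    (hg : ∀ᶠ y in 𝓝 x, HasGradientAt g (V y) y) (hV : DifferentiableAt ℝ V x) :
    lapl N g x = diverg V x := by
  refine Finset.sum_congr rfl fun i _ => ?_
  let π : Euc N →L[ℝ] ℝ := EuclideanSpace.proj i
  have hcoord : (fun y => fderiv ℝ g y (EuclideanSpace.single i 1)) =ᶠ[𝓝 x] fun y => π (V y) := by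
    filter_upwards [hg] with y hy
    simp [π, hy.hasFDerivAt.fderiv, EuclideanSpace.inner_single_right]
  have hπV : HasFDerivAt (fun y => π (V y)) (π.comp (fderiv ℝ V x)) x :=
    π.hasFDerivAt.comp x hV.hasFDerivAt
  rw [hcoord.fderiv_eq, hπV.fderiv]
  rfl

theorem hasFDerivAt_smul_self {g : ℝ → ℝ} {g' : ℝ} {x : Euc N} (hg : HasDerivAt g g' ‖x‖)
    (hx : x ≠ 0) : HasFDerivAt (fun y : Euc N => g ‖y‖ • y)
      (g ‖x‖ • ContinuousLinearMap.id ℝ (Euc N) +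
        ((g' * ‖x‖⁻¹) • innerSL ℝ x).smulRight x) x := by
  refine ((hg.comp_hasFDerivAt x (hasFDerivAt_norm_of_ne_zero hx)).smul
    (hasFDerivAt_id x)).congr_fderiv ?_
  ext v
  simp [smul_smul]

theorem diverg_smul_self {g : ℝ → ℝ} {g' : ℝ} {x : Euc N} (hg : HasDerivAt g g' ‖x‖)
    (hx : x ≠ 0) : diverg (fun y => g ‖y‖ • y) x = ‖x‖ * g' + N * g ‖x‖ := by
  have hnorm : ‖x‖ ≠ 0 := norm_ne_zero_iff.mpr hx
  have hsum : ∑ i, x i * x i = ‖x‖ ^ 2 := by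
    simpa [sq] using (EuclideanSpace.real_norm_sq_eq x).symm
  simp only [diverg, (hasFDerivAt_smul_self hg hx).fderiv]
  simp [EuclideanSpace.inner_single_right, Finset.sum_add_distrib, mul_assoc, ← Finset.mul_sum,
    hsum]
  field_simp
  ring

theorem Lk_comp_norm (k : ℝ) {f f' : ℝ → ℝ} {f'' : ℝ} {x : Euc N} (hx : x ≠ 0)
    (hf : ∀ᶠ r in 𝓝 ‖x‖, HasDerivAt f (f' r) r) (hf' : HasDerivAt f' f'' ‖x‖) :
    Lk N k (fun y => f ‖y‖) x =
      f'' + (N - 1 - k) * f' ‖x‖ / ‖x‖ - k * (N - 2) * f ‖x‖ / ‖x‖ ^ 2 := by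
  have hr : ‖x‖ ≠ 0 := norm_ne_zero_iff.mpr hx
  have hgrad : ∀ᶠ y in 𝓝 x, HasGradientAt (fun y => f ‖y‖) ((f' ‖y‖ / ‖y‖) • y) y := by
    filter_upwards [continuous_norm.continuousAt.eventually hf, eventually_ne_nhds hx]
      with y hfy hy
    exact hfy.hasGradientAt_comp_norm hy
  have hg : HasDerivAt (fun r => f' r / r) _ ‖x‖ := hf'.div (hasDerivAt_id _) hr
  have hh : HasDerivAt (fun r => f r / r ^ 2) _ ‖x‖ :=
    hf.self_of_nhds.div (hasDerivAt_pow 2 _) (pow_ne_zero 2 hr)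
  rw [Lk, lapl_eq_diverg_of_hasGradientAt hgrad (hasFDerivAt_smul_self hg hx).differentiableAt,
    diverg_smul_self hg hx, diverg_smul_self hh hx]
  field_simp
  ring

theorem Lk_norm_rpow_sub_rpow (k a b : ℝ) {x : Euc N} (hx : x ≠ 0) :
    Lk N k (fun y => ‖y‖ ^ a - ‖y‖ ^ b) x =
      (a - k) * (a + N - 2) * ‖x‖ ^ (a - 2) - (b - k) * (b + N - 2) * ‖x‖ ^ (b - 2) := by
  have hr : 0 < ‖x‖ := norm_pos_iff.mpr hx
  have hf : ∀ᶠ r in 𝓝 ‖x‖,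
      HasDerivAt (fun r => r ^ a - r ^ b) (a * r ^ (a - 1) - b * r ^ (b - 1)) r :=
    (lt_mem_nhds hr).mono fun r hpos =>
      (Real.hasDerivAt_rpow_const (Or.inl hpos.ne')).sub
        (Real.hasDerivAt_rpow_const (Or.inl hpos.ne'))
  have hf' : HasDerivAt (fun r => a * r ^ (a - 1) - b * r ^ (b - 1))
      (a * (a - 1) * ‖x‖ ^ (a - 2) - b * (b - 1) * ‖x‖ ^ (b - 2)) ‖x‖ := by
    refine (((Real.hasDerivAt_rpow_const (Or.inl hr.ne')).const_mul a).sub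
      ((Real.hasDerivAt_rpow_const (Or.inl hr.ne')).const_mul b)).congr_deriv ?_
    simp only [sub_sub, one_add_one_eq_two, mul_assoc]
  rw [Lk_comp_norm k hx hf hf']
  simp only [Real.rpow_sub hr, Real.rpow_one, Real.rpow_two]
  field_simp
  ring

theorem Lk_norm_rpow_mul_log (k a : ℝ) {x : Euc N} (hx : x ≠ 0) :
    Lk N k (fun y => ‖y‖ ^ a * Real.log ‖y‖) x =
      ((a - k) * (a + N - 2) * Real.log ‖x‖ + (2 * a + N - 2 - k)) * ‖x‖ ^ (a - 2) := by
  have hr : 0 < ‖x‖ := norm_pos_iff.mpr hx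
  have hf : ∀ᶠ r in 𝓝 ‖x‖, HasDerivAt (fun r => r ^ a * Real.log r)
      (a * r ^ (a - 1) * Real.log r + r ^ (a - 1)) r := by
    filter_upwards [lt_mem_nhds hr] with r hpos
    refine ((Real.hasDerivAt_rpow_const (Or.inl hpos.ne')).mul
      (Real.hasDerivAt_log hpos.ne')).congr_deriv ?_
    rw [Real.rpow_sub hpos, Real.rpow_one, div_eq_mul_inv]
  have hf' : HasDerivAt (fun r => a * r ^ (a - 1) * Real.log r + r ^ (a - 1))
      ((a * (a - 1) * Real.log ‖x‖ + 2 * a - 1) * ‖x‖ ^ (a - 2)) ‖x‖ := by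
    refine ((((Real.hasDerivAt_rpow_const (Or.inl hr.ne')).const_mul a).mul
      (Real.hasDerivAt_log hr.ne')).add
      (Real.hasDerivAt_rpow_const (Or.inl hr.ne'))).congr_deriv ?_
    simp only [sub_sub, one_add_one_eq_two]
    rw [Real.rpow_sub hr, Real.rpow_sub hr, Real.rpow_one, Real.rpow_two]
    field_simp
    ring
  rw [Lk_comp_norm k hx hf hf']
  simp only [Real.rpow_sub hr, Real.rpow_one, Real.rpow_two]
  field_simp
  ring

end

theorem Lk_Dfun (N : ℕ) (k : ℝ) {x : Euc N} (hx : x ≠ 0) : Lk N k (Dfun N k) x = 0 := by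
  rcases lt_trichotomy (2 - (N : ℝ)) k with hk | rfl | hk
  · have hD : Dfun N k =ᶠ[𝓝 x] fun y => ‖y‖ ^ k - ‖y‖ ^ (2 - (N : ℝ)) := by
      filter_upwards [eventually_ne_nhds hx] with y hy
      rw [Dfun, if_pos hk, mul_sub, mul_one, ← Real.rpow_add (norm_pos_iff.mpr hy),
        add_sub_cancel]
    rw [Lk_congr k hD, Lk_norm_rpow_sub_rpow k _ _ hx]
    ring
  · have hD : Dfun N (2 - N) = fun y => ‖y‖ ^ (2 - (N : ℝ)) * Real.log ‖y‖ := by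
      funext y
      simp [Dfun]
    rw [hD, Lk_norm_rpow_mul_log _ _ hx]
    ring
  · have hD : Dfun N k =ᶠ[𝓝 x] fun y => ‖y‖ ^ (2 - (N : ℝ)) - ‖y‖ ^ k := by
      filter_upwards [eventually_ne_nhds hx] with y hy
      rw [Dfun, if_neg hk.not_gt, if_pos hk, mul_sub, mul_one,
        ← Real.rpow_add (norm_pos_iff.mpr hy)]
      ring_nf
    rw [Lk_congr k hD, Lk_norm_rpow_sub_rpow k _ _ hx]
    ring

theorem Dfun_nonneg (N : ℕ) (k : ℝ) {x : Euc N} (hx : 1 ≤ ‖x‖) : 0 ≤ Dfun N k x := by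
  unfold Dfun
  split_ifs with hk₁ hk₂
  · exact mul_nonneg (Real.rpow_nonneg (norm_nonneg x) _)
      (sub_nonneg.mpr (Real.rpow_le_one_of_one_le_of_nonpos hx (by linarith)))
  · exact mul_nonneg (Real.rpow_nonneg (norm_nonneg x) _)
      (sub_nonneg.mpr (Real.rpow_le_one_of_one_le_of_nonpos hx (by linarith)))
  · exact mul_nonneg (Real.rpow_nonneg (norm_nonneg x) _) (Real.log_nonneg hx)

theorem Dfun_of_norm_eq_one (N : ℕ) (k : ℝ) {x : Euc N} (hx : ‖x‖ = 1) : Dfun N k x = 0 := by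
  simp [Dfun, hx]

theorem Dfun_nonneg_harmonic_and_vanishing_general (N : ℕ) (k : ℝ) :
    (∀ x : Euc N, 1 ≤ ‖x‖ → 0 ≤ Dfun N k x) ∧
    (∀ x : Euc N, 1 < ‖x‖ → Lk N k (Dfun N k) x = 0) ∧
    (∀ x : Euc N, ‖x‖ = 1 → Dfun N k x = 0) :=
  ⟨fun _ hx => Dfun_nonneg N k hx,
    fun _ hx => Lk_Dfun N k (norm_pos_iff.mp (one_pos.trans hx)),
    fun _ hx => Dfun_of_norm_eq_one N k hx⟩

/-- The function `𝒟` is nonnegative on `{|x| ≥ 1}`, satisfies `L_k 𝒟 = 0` on `{|x| > 1}`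
and vanishes on the unit sphere. -/
theorem Dfun_nonneg_harmonic_and_vanishing (N : ℕ) (hN : 2 ≤ N) (k : ℝ) :
    (∀ x : Euc N, 1 ≤ ‖x‖ → 0 ≤ Dfun N k x) ∧
    (∀ x : Euc N, 1 < ‖x‖ → Lk N k (Dfun N k) x = 0) ∧
    (∀ x : Euc N, ‖x‖ = 1 → Dfun N k x = 0) :=
  Dfun_nonneg_harmonic_and_vanishing_general N k
end
end

section
/- Let N ≥ 2, k ∈ ℝ, α ≥ −1, σ ∈ ℝ, p > 1. Let ζ ∈ C_c^∞(ℝ) with ζ ≥ 0, ζ ≢ 0, supp(ζ) ⊂ (0,1), and for T > 0, ℓ > 0 set ι(t) = ζ(t/T)^ℓ. Let {ξ_R} be a family of smooth cutoffs with 0 ≤ ξ_R ≤ 1, ξ_R ≡ 1 on B_R, supp(ξ_R) ⊂ B_{2R}, and let {η_R} be a family of smooth cutoffs with 0 ≤ η_R ≤ 1, η_R ≡ 1 on B_{√R}, supp(η_R) ⊂ B_R. Define 𝒩(x) = |x|^k and φ(t,x) = ι(t) 𝒩(x) ξ_R(x)^ℓ, φ*(t,x) = ι(t) 𝒩(x)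 η_R(x)^ℓ on Ω. Then for each μ ∈ {φ, φ*}, for all sufficiently large ℓ there exists a constant C > 0 independent of T and R such that for all sufficiently large T and R, I₁(μ) ≤ C T^{1 − (α+p)/(p−1)} (ln R + R^{N + k − σ/(p−1)}). -/
/-!
The test functions separate variables, `μ(t, x) = ι(t) w(x)` with `w = 𝒩 χ^ℓ`, and since
`-1/(p-1) + p/(p-1) = 1` the integrand of `I₁(μ)` splits into a function of `t` times a function
of `x`; so `I₁(μ)` is a time integral times a space integral.

Where `ζ(t/T) > 0`, `ι^{-1/(p-1)} |ι'|^{p/(p-1)} = ζ(t/T)^{ℓ-p/(p-1)} (ℓ |ζ'(t/T)| / T)^{p/(p-1)}`,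
which is `O(T^{-p/(p-1)})` once `ℓ ≥ p/(p-1)`; as `ζ(t/T) ≠ 0` only for `t ∈ [aT, T]` with some
`a > 0`, the time integral is `O(T^{1-(α+p)/(p-1)})`. The space integral is at most
`∫_{1 ≤ |x| ≤ 2R} |x|^{k-σ/(p-1)} dx`, which polar coordinates turn into
`O(ln R + R^{N+k-σ/(p-1)})`.
-/

open MeasureTheory Metric Set Function

noncomputable section

/-- The exterior domain `B₁ᶜ`. -/
def extDom (N : ℕ) : Set (Euc N) := (ball (0 : Euc N) 1)ᶜ

/-- `Ω = (0,∞) × B₁ᶜ`. -/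
def OmegaSet (N : ℕ) : Set (ℝ × Euc N) := Ioi (0 : ℝ) ×ˢ extDom N

/-- Time derivative `∂_t μ`. -/
def dtD {N : ℕ} (μ : ℝ × Euc N → ℝ) (z : ℝ × Euc N) : ℝ :=
  deriv (fun s => μ (s, z.2)) z.1

open scoped ENNReal

/-- `I₁(μ) = ∫_Ω t^{−α/(p−1)} |x|^{−σ/(p−1)} μ^{−1/(p−1)} |∂_t μ|^{p/(p−1)} dx dt`,
as a lower integral (the integrand vanishes wherever `μ = 0`, by the convention
`0 ^ r = 0` for `r ≠ 0`). -/
def I1 (N : ℕ) (α σ p : ℝ) (μ : ℝ × Euc N → ℝ) : ℝ≥0∞ :=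
  ∫⁻ z in OmegaSet N, ENNReal.ofReal
    (z.1 ^ (-α / (p - 1)) * ‖z.2‖ ^ (-σ / (p - 1)) * μ z ^ (-1 / (p - 1))
      * |dtD μ z| ^ (p / (p - 1)))

/-- `I₂(μ) = ∫_Ω t^{−α/(p−1)} |x|^{−σ/(p−1)} μ^{−1/(p−1)} |L_k μ|^{p/(p−1)} dx dt`,
as a lower integral (the integrand vanishes wherever `μ = 0`). -/
def I2 (N : ℕ) (k α σ p : ℝ) (μ : ℝ × Euc N → ℝ) : ℝ≥0∞ :=
  ∫⁻ z in OmegaSet N, ENNReal.ofReal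
    (z.1 ^ (-α / (p - 1)) * ‖z.2‖ ^ (-σ / (p - 1)) * μ z ^ (-1 / (p - 1))
      * |Lk N k (fun y => μ (z.1, y)) z.2| ^ (p / (p - 1)))

/-- `ι(t) = ζ(t/T)^ℓ`. -/
def iota (ζ : ℝ → ℝ) (T ℓ t : ℝ) : ℝ := ζ (t / T) ^ ℓ

/-- `𝒩(x) = |x|^k`. -/
def Nfun (N : ℕ) (k : ℝ) (x : Euc N) : ℝ := ‖x‖ ^ k

/-- `ζ ∈ C_c^∞(ℝ)`, `ζ ≥ 0`, `ζ ≢ 0`, `supp ζ ⊆ (0,1)`. -/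
structure IsZeta (ζ : ℝ → ℝ) : Prop where
  smooth : ContDiff ℝ (⊤ : ℕ∞) ζ
  nonneg : ∀ s, 0 ≤ ζ s
  ne_zero : ζ ≠ 0
  supp : tsupport ζ ⊆ Ioo (0 : ℝ) 1

/-- A family of smooth cutoffs `ξ_R` with `0 ≤ ξ_R ≤ 1`, `ξ_R ≡ 1` on `B_R` and
`supp ξ_R ⊆ B_{2R}`. -/
structure IsXiFamily (N : ℕ) (ξ : ℝ → Euc N → ℝ) : Prop where
  smooth : ∀ R : ℝ, ContDiff ℝ (⊤ : ℕ∞) (ξ R)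
  mem_Icc : ∀ (R : ℝ) (x : Euc N), ξ R x ∈ Icc (0 : ℝ) 1
  eq_one : ∀ R : ℝ, 1 < R → ∀ x ∈ ball (0 : Euc N) R, ξ R x = 1
  supp : ∀ R : ℝ, 1 < R → Function.support (ξ R) ⊆ ball (0 : Euc N) (2 * R)

/-- A `ξ`-family with in addition `|∇ξ_R| ≤ C₀ R⁻¹` and `|Δξ_R| ≤ C₀ R⁻²`. -/
structure IsXiFamilyBnd (N : ℕ) (ξ : ℝ → Euc N → ℝ) (C₀ : ℝ)
    extends IsXiFamily N ξ : Prop where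
  grad_bound : ∀ R : ℝ, 1 < R → ∀ x : Euc N, ‖gradient (ξ R) x‖ ≤ C₀ / R
  lapl_bound : ∀ R : ℝ, 1 < R → ∀ x : Euc N, |lapl N (ξ R) x| ≤ C₀ / R ^ 2

/-- A family of smooth cutoffs `η_R` with `0 ≤ η_R ≤ 1`, `η_R ≡ 1` on `B_√R` and
`supp η_R ⊆ B_R`. -/
structure IsEtaFamily (N : ℕ) (η : ℝ → Euc N → ℝ) : Prop where
  smooth : ∀ R : ℝ, ContDiff ℝ (⊤ : ℕ∞) (η R)
  mem_Icc : ∀ (R : ℝ) (x : Euc N), η R x ∈ Icc (0 : ℝ) 1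
  eq_one : ∀ R : ℝ, 1 < R → ∀ x ∈ ball (0 : Euc N) (Real.sqrt R), η R x = 1
  supp : ∀ R : ℝ, 1 < R → Function.support (η R) ⊆ ball (0 : Euc N) R

/-- An `η`-family with in addition `|∇η_R(x)| ≤ C₀/(|x| ln R)` and
`|Δη_R(x)| ≤ C₀/(|x|² ln R)` on the annulus `√R < |x| < R`. -/
structure IsEtaFamilyBnd (N : ℕ) (η : ℝ → Euc N → ℝ) (C₀ : ℝ)
    extends IsEtaFamily N η : Prop where
  grad_bound : ∀ R : ℝ, 1 < R → ∀ x : Euc N, Real.sqrt R < ‖x‖ → ‖x‖ < R →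
    ‖gradient (η R) x‖ ≤ C₀ / (‖x‖ * Real.log R)
  lapl_bound : ∀ R : ℝ, 1 < R → ∀ x : Euc N, Real.sqrt R < ‖x‖ → ‖x‖ < R →
    |lapl N (η R) x| ≤ C₀ / (‖x‖ ^ 2 * Real.log R)

theorem mul_rpow_mul_abs_mul_rpow {u v d γ q : ℝ} (hu : 0 ≤ u) (hv : 0 ≤ v) (h : γ + q ≠ 0) :
    (u * v) ^ γ * |d * v| ^ q = u ^ γ * |d| ^ q * v ^ (γ + q) := by
  rw [Real.mul_rpow hu hv, abs_mul, abs_of_nonneg hv, Real.mul_rpow (abs_nonneg d) hv,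
    Real.rpow_add' hv h]
  ring

theorem I1_mul_eq {N : ℕ} {α σ p : ℝ} (hp : 1 < p) {f : ℝ → ℝ} {g : Euc N → ℝ}
    (hf₀ : 0 ≤ f) (hg₀ : 0 ≤ g) (hf : Measurable f) (hg : Measurable g) :
    I1 N α σ p (fun z => f z.1 * g z.2) =
      (∫⁻ t in Ioi 0, ENNReal.ofReal
        (t ^ (-α / (p - 1)) * f t ^ (-1 / (p - 1)) * |deriv f t| ^ (p / (p - 1)))) *
      ∫⁻ x in extDom N, ENNReal.ofReal (‖x‖ ^ (-σ / (p - 1)) * g x) := by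
  have hexp : -1 / (p - 1) + p / (p - 1) = 1 := by
    rw [← add_div, neg_add_eq_sub, div_self (sub_pos.2 hp).ne']
  have hsplit : ∀ z : ℝ × Euc N,
      z.1 ^ (-α / (p - 1)) * ‖z.2‖ ^ (-σ / (p - 1)) * (f z.1 * g z.2) ^ (-1 / (p - 1)) *
        |dtD (fun z => f z.1 * g z.2) z| ^ (p / (p - 1)) =
      (z.1 ^ (-α / (p - 1)) * f z.1 ^ (-1 / (p - 1)) * |deriv f z.1| ^ (p / (p - 1))) *
        (‖z.2‖ ^ (-σ / (p - 1)) * g z.2) := by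
    rintro ⟨t, x⟩
    have hfactor := mul_rpow_mul_abs_mul_rpow (hf₀ t) (hg₀ x) (d := deriv f t)
      (hexp ▸ one_ne_zero)
    dsimp only [dtD]
    rw [deriv_mul_const_field, mul_assoc _ _ (|_| ^ _), hfactor, hexp, Real.rpow_one]
    ring
  have hA : Measurable fun t : ℝ =>
      ENNReal.ofReal (t ^ (-α / (p - 1)) * f t ^ (-1 / (p - 1)) * |deriv f t| ^ (p / (p - 1))) := by
    have := measurable_deriv f
    fun_prop
  have hB : Measurable fun x : Euc N => ENNReal.ofReal (‖x‖ ^ (-σ / (p - 1)) * g x) := by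
    fun_prop
  simp_rw [I1, hsplit]
  simp_rw [ENNReal.ofReal_mul' (mul_nonneg (Real.rpow_nonneg (norm_nonneg _) _) (hg₀ _))]
  rw [OmegaSet, Measure.volume_eq_prod, ← Measure.prod_restrict]
  exact lintegral_prod_mul hA.aemeasurable hB.aemeasurable

theorem IsZeta.hasCompactSupport {ζ : ℝ → ℝ} (hζ : IsZeta ζ) : HasCompactSupport ζ :=
  isCompact_of_isClosed_isBounded (isClosed_tsupport ζ)
    ((isBounded_Icc 0 1).subset (hζ.supp.trans Ioo_subset_Icc_self))

theorem IsZeta.exists_pos_forall_mem_Icc {ζ : ℝ → ℝ} (hζ : IsZeta ζ) :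
    ∃ a, 0 < a ∧ ∀ s, ζ s ≠ 0 → s ∈ Icc a 1 := by
  have hne : (tsupport ζ).Nonempty :=
    nonempty_iff_ne_empty.2 fun h => hζ.ne_zero (tsupport_eq_empty_iff.1 h)
  have hK := hζ.hasCompactSupport
  refine ⟨sInf (tsupport ζ), (hζ.supp (hK.sInf_mem hne)).1, fun s hs => ?_⟩
  have hsK : s ∈ tsupport ζ := subset_tsupport ζ hs
  exact ⟨csInf_le hK.bddBelow hsK, (hζ.supp hsK).2.le⟩

theorem IsZeta.exists_bound {ζ : ℝ → ℝ} (hζ : IsZeta ζ) : ∃ M, 0 < M ∧ ∀ s, ζ s ≤ M := by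
  obtain ⟨M, hM⟩ := hζ.smooth.continuous.bounded_above_of_compact_support hζ.hasCompactSupport
  exact ⟨max M 1, by positivity, fun s => (le_abs_self _).trans ((hM s).trans (le_max_left _ _))⟩

theorem IsZeta.exists_abs_deriv_bound {ζ : ℝ → ℝ} (hζ : IsZeta ζ) :
    ∃ M, 0 < M ∧ ∀ s, |deriv ζ s| ≤ M := by
  obtain ⟨M, hM⟩ := (hζ.smooth.continuous_deriv (by simp)).bounded_above_of_compact_support
    hζ.hasCompactSupport.deriv
  exact ⟨max M 1, by positivity, fun s => (hM s).trans (le_max_left _ _)⟩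

theorem hasDerivAt_iota {ζ : ℝ → ℝ} {T ℓ t : ℝ} (hd : DifferentiableAt ℝ ζ (t / T))
    (h0 : ζ (t / T) ≠ 0) :
    HasDerivAt (iota ζ T ℓ) (deriv ζ (t / T) / T * ℓ * ζ (t / T) ^ (ℓ - 1)) t := by
  have := (hd.hasDerivAt.comp t ((hasDerivAt_id t).div_const T)).rpow_const (p := ℓ) (Or.inl h0)
  exact this.congr_deriv (by simp only [comp_apply, id]; ring)

theorem rpow_le_max_of_mem_Icc {a s β : ℝ} (ha : 0 < a) (hs : s ∈ Icc a 1) :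
    s ^ β ≤ max (a ^ β) 1 := by
  rcases le_or_gt 0 β with hβ | hβ
  · exact le_max_of_le_right (Real.rpow_le_one (ha.le.trans hs.1) hs.2 hβ)
  · exact le_max_of_le_left (Real.rpow_le_rpow_of_nonpos ha hs.1 hβ.le)

theorem iota_rpow_mul_abs_deriv_rpow_le {ζ : ℝ → ℝ} (hζ : IsZeta ζ) {p ℓ : ℝ} (hp : 1 < p)
    (hℓ : p / (p - 1) ≤ ℓ) {M₁ M₂ : ℝ} (hM₁ : ∀ s, ζ s ≤ M₁) (hM₂ : ∀ s, |deriv ζ s| ≤ M₂)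
    {T : ℝ} (hT : 0 < T) (t : ℝ) :
    iota ζ T ℓ t ^ (-1 / (p - 1)) * |deriv (iota ζ T ℓ) t| ^ (p / (p - 1)) ≤
      M₁ ^ (ℓ - p / (p - 1)) * (ℓ * M₂ / T) ^ (p / (p - 1)) := by
  have hp₁ : 0 < p - 1 := sub_pos.2 hp
  have hq : 0 < p / (p - 1) := div_pos (by linarith) hp₁
  have hℓ₀ : 0 < ℓ := hq.trans_le hℓ
  have hM₁₀ : 0 ≤ M₁ := (hζ.nonneg 0).trans (hM₁ 0)
  have hM₂₀ : 0 ≤ M₂ := (abs_nonneg _).trans (hM₂ 0)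
  obtain hc | hc := (hζ.nonneg (t / T)).eq_or_lt
  · have : iota ζ T ℓ t = 0 := by rw [iota, ← hc, Real.zero_rpow hℓ₀.ne']
    rw [this, Real.zero_rpow (div_ne_zero (by norm_num) hp₁.ne'), zero_mul]
    positivity
  set c := ζ (t / T)
  set d := deriv ζ (t / T)
  have hexp : ℓ * (-1 / (p - 1)) + (ℓ - 1) * (p / (p - 1)) = ℓ - p / (p - 1) := by
    field_simp; ring
  have hderiv : |deriv (iota ζ T ℓ) t| = |d| * ℓ / T * c ^ (ℓ - 1) := by
    rw [(hasDerivAt_iota ((hζ.smooth.differentiable (by simp)) _) hc.ne').deriv, abs_mul,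
      abs_mul, abs_div, abs_of_pos hT, abs_of_pos hℓ₀, abs_of_pos (Real.rpow_pos_of_pos hc _)]
    ring
  have hd : |d| * ℓ / T ≤ ℓ * M₂ / T := by
    rw [mul_comm ℓ]; gcongr; exact hM₂ _
  calc iota ζ T ℓ t ^ (-1 / (p - 1)) * |deriv (iota ζ T ℓ) t| ^ (p / (p - 1))
      = c ^ (ℓ - p / (p - 1)) * (|d| * ℓ / T) ^ (p / (p - 1)) := by
        rw [hderiv, iota, Real.mul_rpow (by positivity) (Real.rpow_nonneg hc.le _),
          ← Real.rpow_mul hc.le, ← Real.rpow_mul hc.le, ← hexp, Real.rpow_add hc]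
        ring
    _ ≤ M₁ ^ (ℓ - p / (p - 1)) * (ℓ * M₂ / T) ^ (p / (p - 1)) := by
        gcongr
        exact hM₁ _

theorem exists_lintegral_time_weight_iota_le {ζ : ℝ → ℝ} (hζ : IsZeta ζ) {α p ℓ : ℝ} (hp : 1 < p)
    (hℓ : p / (p - 1) ≤ ℓ) :
    ∃ C, 0 < C ∧ ∀ T, 0 < T →
      ∫⁻ t in Ioi 0, ENNReal.ofReal (t ^ (-α / (p - 1)) * iota ζ T ℓ t ^ (-1 / (p - 1)) *
          |deriv (iota ζ T ℓ) t| ^ (p / (p - 1)))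
        ≤ ENNReal.ofReal (C * T ^ (1 - (α + p) / (p - 1))) := by
  obtain ⟨a, ha, haζ⟩ := hζ.exists_pos_forall_mem_Icc
  obtain ⟨M₁, hM₁₀, hM₁⟩ := hζ.exists_bound
  obtain ⟨M₂, hM₂₀, hM₂⟩ := hζ.exists_abs_deriv_bound
  have hp₁ : 0 < p - 1 := sub_pos.2 hp
  have hℓ₀ : 0 < ℓ := (div_pos (by linarith) hp₁).trans_le hℓ
  set β := -α / (p - 1)
  set q := p / (p - 1)
  set K := max (a ^ β) 1 * M₁ ^ (ℓ - q) * (ℓ * M₂) ^ q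
  refine ⟨K, by positivity, fun T hT => ?_⟩
  have hpoint : ∀ t, ENNReal.ofReal (t ^ β * iota ζ T ℓ t ^ (-1 / (p - 1)) *
      |deriv (iota ζ T ℓ) t| ^ q) ≤
        (Icc (a * T) T).indicator (fun _ => ENNReal.ofReal (K * T ^ (β - q))) t := by
    intro t
    by_cases h0 : ζ (t / T) = 0
    · have : iota ζ T ℓ t = 0 := by rw [iota, h0, Real.zero_rpow hℓ₀.ne']
      rw [this, Real.zero_rpow (div_ne_zero (by norm_num) hp₁.ne'), mul_zero, zero_mul,
        ENNReal.ofReal_zero]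
      exact zero_le
    have hs := haζ _ h0
    have ht : t ∈ Icc (a * T) T := ⟨(le_div_iff₀ hT).1 hs.1, (div_le_one hT).1 hs.2⟩
    have ht₀ : 0 < t := (mul_pos ha hT).trans_le ht.1
    have htβ : t ^ β ≤ max (a ^ β) 1 * T ^ β := by
      rw [← div_mul_cancel₀ t hT.ne', Real.mul_rpow (div_nonneg ht₀.le hT.le) hT.le]
      gcongr
      exact rpow_le_max_of_mem_Icc ha hs
    rw [indicator_of_mem ht]
    apply ENNReal.ofReal_le_ofReal
    calc t ^ β * iota ζ T ℓ t ^ (-1 / (p - 1)) * |deriv (iota ζ T ℓ) t| ^ q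
        = t ^ β * (iota ζ T ℓ t ^ (-1 / (p - 1)) * |deriv (iota ζ T ℓ) t| ^ q) := mul_assoc _ _ _
      _ ≤ (max (a ^ β) 1 * T ^ β) * (M₁ ^ (ℓ - q) * (ℓ * M₂ / T) ^ q) :=
        mul_le_mul htβ (iota_rpow_mul_abs_deriv_rpow_le hζ hp hℓ hM₁ hM₂ hT t)
          (mul_nonneg (Real.rpow_nonneg (Real.rpow_nonneg (hζ.nonneg _) _) _)
            (Real.rpow_nonneg (abs_nonneg _) _))
          (by positivity)
      _ = K * T ^ (β - q) := by
        rw [Real.div_rpow (by positivity) hT.le, Real.rpow_sub hT]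
        ring
  calc _ ≤ ∫⁻ t in Ioi 0, (Icc (a * T) T).indicator (fun _ => ENNReal.ofReal (K * T ^ (β - q))) t :=
        lintegral_mono hpoint
    _ ≤ ∫⁻ t, (Icc (a * T) T).indicator (fun _ => ENNReal.ofReal (K * T ^ (β - q))) t :=
        setLIntegral_le_lintegral _ _
    _ = ENNReal.ofReal (K * T ^ (β - q)) * ENNReal.ofReal (T - a * T) := by
        rw [lintegral_indicator_const measurableSet_Icc, Real.volume_Icc]
    _ ≤ ENNReal.ofReal (K * T ^ (β - q) * T) := by
        rw [← ENNReal.ofReal_mul (by positivity)]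
        gcongr
        nlinarith
    _ = ENNReal.ofReal (K * T ^ (1 - (α + p) / (p - 1))) := by
        rw [mul_assoc, ← Real.rpow_add_one hT.ne']
        congr 3
        simp only [β, q]
        field_simp
        ring

theorem exists_intervalIntegral_rpow_sub_one_le (m : ℝ) :
    ∃ c, 0 < c ∧ ∀ R : ℝ, 3 ≤ R →
      ∫ y in (1 : ℝ)..2 * R, y ^ (m - 1) ≤ c * (Real.log R + R ^ m) := by
  have hlog : ∀ R : ℝ, 3 ≤ R → 1 ≤ Real.log R := fun R hR => by
    rw [Real.le_log_iff_exp_le (by linarith)]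
    linarith [Real.exp_one_lt_d9]
  have h0 : ∀ R : ℝ, 3 ≤ R → (0 : ℝ) ∉ uIcc 1 (2 * R) := fun R hR => by
    rw [uIcc_of_le (by linarith)]
    exact fun h => by linarith [h.1]
  have hint : ∀ R : ℝ, 3 ≤ R → m ≠ 0 →
      ∫ y in (1 : ℝ)..2 * R, y ^ (m - 1) = ((2 * R) ^ m - 1) / m := fun R hR hm => by
    rw [integral_rpow (Or.inr ⟨by simpa using hm, h0 R hR⟩), sub_add_cancel, Real.one_rpow]
  rcases lt_trichotomy m 0 with hm | rfl | hm
  · have hc : 0 < 1 / -m := one_div_pos.2 (neg_pos.2 hm)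
    refine ⟨1 / -m, hc, fun R hR => ?_⟩
    have h2R : 0 < (2 * R) ^ m := Real.rpow_pos_of_pos (by linarith) m
    have hRm : 0 < R ^ m := Real.rpow_pos_of_pos (by linarith) m
    calc ∫ y in (1 : ℝ)..2 * R, y ^ (m - 1) = (1 - (2 * R) ^ m) * (1 / -m) := by
          rw [hint R hR hm.ne]; field_simp; ring
      _ ≤ (Real.log R + R ^ m) * (1 / -m) := by gcongr; linarith [hlog R hR]
      _ = 1 / -m * (Real.log R + R ^ m) := mul_comm _ _
  · refine ⟨2, two_pos, fun R hR => ?_⟩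
    simp only [zero_sub, Real.rpow_neg_one]
    rw [integral_inv (h0 R hR), div_one, Real.rpow_zero,
      Real.log_mul two_ne_zero (by linarith)]
    linarith [Real.log_two_lt_d9, hlog R hR]
  · refine ⟨2 ^ m / m, by positivity, fun R hR => ?_⟩
    have hR₀ : 0 ≤ R := by linarith
    calc ∫ y in (1 : ℝ)..2 * R, y ^ (m - 1) = ((2 * R) ^ m - 1) / m := hint R hR hm.ne'
      _ ≤ (2 * R) ^ m / m := by gcongr; linarith
      _ = 2 ^ m / m * R ^ m := by rw [Real.mul_rpow zero_le_two hR₀]; ring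
      _ ≤ 2 ^ m / m * (Real.log R + R ^ m) := by gcongr; linarith [hlog R hR]

theorem lintegral_ofReal_fun_norm_addHaar {E : Type*} [NormedAddCommGroup E] [NormedSpace ℝ E]
    [Nontrivial E] [FiniteDimensional ℝ E] [MeasurableSpace E] [BorelSpace E] (μ : Measure E)
    [μ.IsAddHaarMeasure] {f : ℝ → ℝ} (hf₀ : 0 ≤ f)
    (hf : IntegrableOn (fun y => y ^ (Module.finrank ℝ E - 1) * f y) (Ioi 0)) :
    ∫⁻ x, ENNReal.ofReal (f ‖x‖) ∂μ = ENNReal.ofReal (Module.finrank ℝ E * μ.real (ball 0 1) *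
      ∫ y in Ioi 0, y ^ (Module.finrank ℝ E - 1) * f y) := by
  rw [← ofReal_integral_eq_lintegral_ofReal ((integrable_fun_norm_addHaar μ).2 hf)
    (ae_of_all _ fun x => hf₀ _), integral_fun_norm_addHaar, nsmul_eq_mul, smul_eq_mul]
  simp only [smul_eq_mul, mul_assoc]

theorem exists_lintegral_indicator_rpow_norm_le {N : ℕ} (hN : 1 ≤ N) (e : ℝ) :
    ∃ B, 0 < B ∧ ∀ R : ℝ, 3 ≤ R →
      ∫⁻ x : Euc N, ENNReal.ofReal ((Icc 1 (2 * R)).indicator (· ^ e) ‖x‖)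
        ≤ ENNReal.ofReal (B * (Real.log R + R ^ ((N : ℝ) + e))) := by
  have : Nontrivial (Euc N) :=
    Module.nontrivial_of_finrank_pos (R := ℝ) (by rw [finrank_euclideanSpace_fin]; omega)
  obtain ⟨c, hc, hcR⟩ := exists_intervalIntegral_rpow_sub_one_le ((N : ℝ) + e)
  have hv : 0 < volume.real (ball (0 : Euc N) 1) :=
    ENNReal.toReal_pos (measure_ball_pos volume 0 one_pos).ne' measure_ball_lt_top.ne
  refine ⟨N * volume.real (ball (0 : Euc N) 1) * c, by positivity, fun R hR => ?_⟩
  have hradial : (fun y : ℝ => y ^ (N - 1) * (Icc 1 (2 * R)).indicator (· ^ e) y) =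
      (Icc 1 (2 * R)).indicator (· ^ ((N : ℝ) + e - 1)) := by
    ext y
    by_cases hy : y ∈ Icc 1 (2 * R)
    · rw [indicator_of_mem hy, indicator_of_mem hy, ← Real.rpow_natCast,
        ← Real.rpow_add (by linarith [hy.1]), Nat.cast_sub hN]
      ring_nf
    · rw [indicator_of_notMem hy, indicator_of_notMem hy, mul_zero]
  have hcont : ContinuousOn (· ^ ((N : ℝ) + e - 1)) (Icc (1 : ℝ) (2 * R)) :=
    fun y hy => (Real.continuousAt_rpow_const _ _ (Or.inl (by linarith [hy.1]))).continuousWithinAt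
  rw [lintegral_ofReal_fun_norm_addHaar volume
      (indicator_nonneg fun y hy => Real.rpow_nonneg (by linarith [hy.1]) _) ?integrable,
    finrank_euclideanSpace_fin, hradial, setIntegral_indicator measurableSet_Icc,
    inter_eq_right.2 fun y hy => mem_Ioi.2 (by linarith [hy.1]), integral_Icc_eq_integral_Ioc,
    ← intervalIntegral.integral_of_le (by linarith)]
  case integrable =>
    rw [finrank_euclideanSpace_fin, hradial]
    exact (hcont.integrableOn_Icc.integrable_indicator measurableSet_Icc).integrableOn
  apply ENNReal.ofReal_le_ofReal
  rw [mul_assoc _ c]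
  gcongr
  exact hcR R hR

theorem exists_lintegral_extDom_cutoff_le {N : ℕ} (hN : 1 ≤ N) (k a : ℝ) :
    ∃ B, 0 < B ∧ ∀ R : ℝ, 3 ≤ R → ∀ ℓ : ℝ, 0 < ℓ → ∀ χ : Euc N → ℝ,
      (∀ x, χ x ∈ Icc 0 1) → support χ ⊆ ball 0 (2 * R) →
        ∫⁻ x in extDom N, ENNReal.ofReal (‖x‖ ^ a * (Nfun N k x * χ x ^ ℓ))
          ≤ ENNReal.ofReal (B * (Real.log R + R ^ ((N : ℝ) + (a + k)))) := by
  obtain ⟨B, hB, hBR⟩ := exists_lintegral_indicator_rpow_norm_le hN (a + k)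
  refine ⟨B, hB, fun R hR ℓ hℓ χ hχ hsupp => (hBR R hR).trans' ?_⟩
  refine (setLIntegral_mono' measurableSet_ball.compl fun x hx => ?_).trans
    (setLIntegral_le_lintegral _ _)
  have hx₁ : 1 ≤ ‖x‖ := by simpa [extDom] using hx
  by_cases h0 : χ x = 0
  · rw [h0, Real.zero_rpow hℓ.ne', mul_zero, mul_zero, ENNReal.ofReal_zero]
    exact zero_le
  have hx₂ : ‖x‖ < 2 * R := by simpa using hsupp h0
  rw [indicator_of_mem (show ‖x‖ ∈ Icc 1 (2 * R) from ⟨hx₁, hx₂.le⟩),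
    Real.rpow_add (by linarith), Nfun]
  gcongr
  calc ‖x‖ ^ k * χ x ^ ℓ ≤ ‖x‖ ^ k * 1 := by
        gcongr
        exact Real.rpow_le_one (hχ x).1 (hχ x).2 hℓ.le
    _ = ‖x‖ ^ k := mul_one _

theorem exists_I1_iota_mul_cutoff_le {N : ℕ} (hN : 1 ≤ N) (k α σ : ℝ) {p : ℝ} (hp : 1 < p)
    {ζ : ℝ → ℝ} (hζ : IsZeta ζ) {ℓ : ℝ} (hℓ : p / (p - 1) ≤ ℓ) :
    ∃ C, 0 < C ∧ ∀ T, 0 < T → ∀ R, 3 ≤ R → ∀ χ : Euc N → ℝ, Measurable χ →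
      (∀ x, χ x ∈ Icc 0 1) → support χ ⊆ ball 0 (2 * R) →
        I1 N α σ p (fun z => iota ζ T ℓ z.1 * (Nfun N k z.2 * χ z.2 ^ ℓ))
          ≤ ENNReal.ofReal (C * T ^ (1 - (α + p) / (p - 1))
              * (Real.log R + R ^ ((N : ℝ) + k - σ / (p - 1)))) := by
  have hℓ₀ : 0 < ℓ := (div_pos (by linarith) (sub_pos.2 hp)).trans_le hℓ
  obtain ⟨C₁, hC₁, htime⟩ := exists_lintegral_time_weight_iota_le (α := α) hζ hp hℓ
  obtain ⟨C₂, hC₂, hspace⟩ := exists_lintegral_extDom_cutoff_le hN k (-σ / (p - 1))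
  refine ⟨C₁ * C₂, mul_pos hC₁ hC₂, fun T hT R hR χ hχm hχ hsupp => ?_⟩
  have hζm := hζ.smooth.continuous.measurable
  have hexp : (N : ℝ) + (-σ / (p - 1) + k) = N + k - σ / (p - 1) := by ring
  calc _ = _ := I1_mul_eq hp (f := iota ζ T ℓ) (g := fun x => Nfun N k x * χ x ^ ℓ)
          (fun t => Real.rpow_nonneg (hζ.nonneg _) _)
          (fun x => mul_nonneg (Real.rpow_nonneg (norm_nonneg _) _)
            (Real.rpow_nonneg (hχ x).1 _))
          (by unfold iota; fun_prop) (by unfold Nfun; fun_prop)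
    _ ≤ ENNReal.ofReal (C₁ * T ^ (1 - (α + p) / (p - 1))) *
          ENNReal.ofReal (C₂ * (Real.log R + R ^ ((N : ℝ) + (-σ / (p - 1) + k)))) :=
        mul_le_mul' (htime T hT) (hspace R hR ℓ hℓ₀ χ hχ hsupp)
    _ = _ := by
        rw [← ENNReal.ofReal_mul (by positivity), hexp]
        ring_nf

theorem I1_estimate_neumann_test_functions_general (N : ℕ) (hN : 2 ≤ N) (k α σ p : ℝ)
    (hp : 1 < p)
    (ζ : ℝ → ℝ) (hζ : IsZeta ζ)
    (ξ : ℝ → Euc N → ℝ) (hξ : IsXiFamily N ξ)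
    (η : ℝ → Euc N → ℝ) (hη : IsEtaFamily N η) :
    ∃ ℓ₀ : ℝ, ∀ ℓ : ℝ, ℓ₀ ≤ ℓ → ∃ C : ℝ, 0 < C ∧ ∃ T₀ R₀ : ℝ,
      ∀ T : ℝ, T₀ ≤ T → ∀ R : ℝ, R₀ ≤ R →
        I1 N α σ p (fun z => iota ζ T ℓ z.1 * (Nfun N k z.2 * ξ R z.2 ^ ℓ))
          ≤ ENNReal.ofReal (C * T ^ (1 - (α + p) / (p - 1))
              * (Real.log R + R ^ ((N : ℝ) + k - σ / (p - 1)))) ∧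
        I1 N α σ p (fun z => iota ζ T ℓ z.1 * (Nfun N k z.2 * η R z.2 ^ ℓ))
          ≤ ENNReal.ofReal (C * T ^ (1 - (α + p) / (p - 1))
              * (Real.log R + R ^ ((N : ℝ) + k - σ / (p - 1)))) := by
  refine ⟨p / (p - 1), fun ℓ hℓ => ?_⟩
  obtain ⟨C, hC, hCle⟩ := exists_I1_iota_mul_cutoff_le (by omega : 1 ≤ N) k α σ hp hζ hℓ
  refine ⟨C, hC, 1, 3, fun T hT R hR => ⟨?_, ?_⟩⟩
  · exact hCle T (by linarith) R hR (ξ R) (hξ.smooth R).continuous.measurable (hξ.mem_Icc R)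
      (hξ.supp R (by linarith))
  · exact hCle T (by linarith) R hR (η R) (hη.smooth R).continuous.measurable (hη.mem_Icc R)
      ((hη.supp R (by linarith)).trans (ball_subset_ball (by linarith)))

/-- **Lemma 2.7**: for `μ = φ` or `μ = φ*`, where `φ(t,x) = ι(t) 𝒩(x) ξ_R(x)^ℓ` and
`φ*(t,x) = ι(t) 𝒩(x) η_R(x)^ℓ`, for all sufficiently large `ℓ` there is `C > 0`
independent of `T, R` such that, for all sufficiently large `T` and `R`,
`I₁(μ) ≤ C T^{1−(α+p)/(p−1)} (ln R + R^{N+k−σ/(p−1)})`. -/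
theorem I1_estimate_neumann_test_functions (N : ℕ) (hN : 2 ≤ N) (k α σ p : ℝ)
    (hα : -1 ≤ α) (hp : 1 < p)
    (ζ : ℝ → ℝ) (hζ : IsZeta ζ)
    (ξ : ℝ → Euc N → ℝ) (hξ : IsXiFamily N ξ)
    (η : ℝ → Euc N → ℝ) (hη : IsEtaFamily N η) :
    ∃ ℓ₀ : ℝ, ∀ ℓ : ℝ, ℓ₀ ≤ ℓ → ∃ C : ℝ, 0 < C ∧ ∃ T₀ R₀ : ℝ,
      ∀ T : ℝ, T₀ ≤ T → ∀ R : ℝ, R₀ ≤ R →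
        I1 N α σ p (fun z => iota ζ T ℓ z.1 * (Nfun N k z.2 * ξ R z.2 ^ ℓ))
          ≤ ENNReal.ofReal (C * T ^ (1 - (α + p) / (p - 1))
              * (Real.log R + R ^ ((N : ℝ) + k - σ / (p - 1)))) ∧
        I1 N α σ p (fun z => iota ζ T ℓ z.1 * (Nfun N k z.2 * η R z.2 ^ ℓ))
          ≤ ENNReal.ofReal (C * T ^ (1 - (α + p) / (p - 1))
              * (Real.log R + R ^ ((N : ℝ) + k - σ / (p - 1)))) :=
  I1_estimate_neumann_test_functions_general N hN k α σ p hp ζ hζ ξ hξ η hη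
end
end

section
/- Let N ≥ 2, k > 2 − N, σ > −2, and p > 1 + (σ + 2)/(N + k − 2). Let δ satisfy 2 − N − k < δ < −(σ + 2)/(p − 1) < 0 and let ε satisfy 0 < ε < [δ(2 − N − k − δ)]^{1/(p−1)}. Then the function u(x) = ε |x|^δ satisfies the stationary differential inequality Δu(x) + k (x/|x|²)·∇u(x) + |x|^σ u(x)^p ≤ 0 for every x ∈ ℝ^N with |x| ≥ 1; equivalently, u is a positive stationary (super)solution of ∂_t u − Δu − k (x/|x|²)·∇u ≥ |x|^σ u^p on B₁^c. -/
/-! With `r = |x|`, the radial power `ε r^δ` satisfies `Δu + k (x/r²)·∇u = -ε δ (2 - N - k - δ) r^(δ-2)`,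
a negative multiple of `r^(δ-2)`, while `δ < -(σ+2)/(p-1)` makes the source term
`r^σ (ε r^δ)^p = ε^p r^(σ+δp)` decay at least as fast as `r^(δ-2)` on `r ≥ 1`. The smallness
`ε^(p-1) < δ (2 - N - k - δ)` then lets the diffusion term absorb the source term. -/

open MeasureTheory Metric Set Function

noncomputable section

section RadialPower

open scoped RealInnerProductSpace Topology

variable {E : Type*} [NormedAddCommGroup E] [InnerProductSpace ℝ E]

theorem hasFDerivAt_norm_rpow_of_ne_zero {x : E} (hx : x ≠ 0) (a : ℝ) :
    HasFDerivAt (fun y : E ↦ ‖y‖ ^ a) ((a * ‖x‖ ^ (a - 2)) • innerSL ℝ x) x := by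
  apply HasStrictFDerivAt.hasFDerivAt
  convert (hasStrictFDerivAt_norm_sq x).rpow_const (p := a / 2) (by simp [hx]) using 0
  simp_rw [← Real.rpow_natCast_mul (norm_nonneg _), ← Nat.cast_smul_eq_nsmul ℝ, smul_smul]
  ring_nf

theorem fderiv_const_mul_norm_rpow_apply (c a : ℝ) {x : E} (hx : x ≠ 0) (v : E) :
    fderiv ℝ (fun y : E ↦ c * ‖y‖ ^ a) x v = c * a * ‖x‖ ^ (a - 2) * ⟪x, v⟫ := by
  rw [((hasFDerivAt_norm_rpow_of_ne_zero hx a).const_mul c).fderiv]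
  simp only [FunLike.coe_smul, Pi.smul_apply, innerSL_apply_apply, smul_eq_mul]
  ring

theorem fderiv_const_mul_norm_rpow_apply_radial (c a : ℝ) {x : E} (hx : x ≠ 0) :
    fderiv ℝ (fun y : E ↦ c * ‖y‖ ^ a) x ((‖x‖ ^ 2)⁻¹ • x) = c * a * ‖x‖ ^ (a - 2) := by
  have hx2 : ‖x‖ ^ 2 ≠ 0 := by positivity
  rw [fderiv_const_mul_norm_rpow_apply c a hx, real_inner_smul_right, real_inner_self_eq_norm_sq,
    inv_mul_cancel₀ hx2, mul_one]

theorem fderiv_fderiv_const_mul_norm_rpow_apply (c a : ℝ) {x : E} (hx : x ≠ 0) (v : E) :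
    fderiv ℝ (fun y ↦ fderiv ℝ (fun z : E ↦ c * ‖z‖ ^ a) y v) x v
      = c * a * (‖x‖ ^ (a - 2) * ‖v‖ ^ 2 + (a - 2) * ‖x‖ ^ (a - 4) * ⟪x, v⟫ ^ 2) := by
  have hfirst : (fun y ↦ fderiv ℝ (fun z : E ↦ c * ‖z‖ ^ a) y v)
      =ᶠ[𝓝 x] fun y ↦ c * a * ‖y‖ ^ (a - 2) * innerSL ℝ v y := by
    filter_upwards [isOpen_compl_singleton.mem_nhds hx] with y hy
    rw [fderiv_const_mul_norm_rpow_apply c a hy, innerSL_apply_apply, real_inner_comm]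
  have hsecond : HasFDerivAt (fun y ↦ c * a * ‖y‖ ^ (a - 2) * innerSL ℝ v y) _ x :=
    ((hasFDerivAt_norm_rpow_of_ne_zero hx (a - 2)).const_mul (c * a)).mul
      (innerSL ℝ v).hasFDerivAt
  rw [hfirst.fderiv_eq, hsecond.fderiv]
  simp only [add_apply, FunLike.coe_smul, Pi.smul_apply,
    innerSL_apply_apply, smul_eq_mul, real_inner_self_eq_norm_sq, real_inner_comm x v]
  rw [show a - 2 - 2 = a - 4 by ring]
  ring

end RadialPower

theorem lapl_const_mul_norm_rpow (N : ℕ) (c a : ℝ) {x : Euc N} (hx : x ≠ 0) :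
    lapl N (fun y ↦ c * ‖y‖ ^ a) x = c * a * (N + a - 2) * ‖x‖ ^ (a - 2) := by
  have hsq : ‖x‖ ^ (a - 4) * ‖x‖ ^ 2 = ‖x‖ ^ (a - 2) := by
    rw [← Real.rpow_natCast, ← Real.rpow_add (norm_pos_iff.mpr hx)]
    norm_num
    ring_nf
  simp only [lapl, ← EuclideanSpace.basisFun_apply, fderiv_fderiv_const_mul_norm_rpow_apply c a hx,
    OrthonormalBasis.norm_eq_one, ← Finset.mul_sum, Finset.sum_add_distrib, one_pow, mul_one,
    Finset.sum_const, Finset.card_univ, Fintype.card_fin, nsmul_eq_mul,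
    (EuclideanSpace.basisFun (Fin N) ℝ).sum_sq_inner_left x]
  linear_combination c * a * (a - 2) * hsq

theorem radial_power_source_absorbed {n k σ p δ ε r : ℝ} (hr : 1 ≤ r) (hε : 0 < ε)
    (hexp : σ + δ * p ≤ δ - 2) (hεp : ε ^ (p - 1) ≤ δ * (2 - n - k - δ)) :
    ε * δ * (n + δ - 2) * r ^ (δ - 2) + k * (ε * δ * r ^ (δ - 2)) + r ^ σ * (ε * r ^ δ) ^ p
      ≤ 0 := by
  have hr0 : 0 < r := one_pos.trans_le hr
  have hsource : r ^ σ * (ε * r ^ δ) ^ p = ε * (ε ^ (p - 1) * r ^ (σ + δ * p)) := by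
    rw [Real.mul_rpow hε.le (Real.rpow_nonneg hr0.le δ), ← Real.rpow_mul hr0.le,
      Real.rpow_add hr0, Real.rpow_sub_one hε.ne']
    field_simp
  have hdecay : ε ^ (p - 1) * r ^ (σ + δ * p) ≤ δ * (2 - n - k - δ) * r ^ (δ - 2) :=
    mul_le_mul hεp (Real.rpow_le_rpow_of_exponent_le hr hexp) (by positivity)
      ((Real.rpow_nonneg hε.le _).trans hεp)
  rw [hsource]
  linarith [mul_le_mul_of_nonneg_left hdecay hε.le]

theorem stationary_supersolution_supercritical_general (N : ℕ) (k σ p δ ε : ℝ)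
    (hσ : -2 < σ)
    (hδ₁ : 2 - (N : ℝ) - k < δ) (hδ₂ : δ < -(σ + 2) / (p - 1))
    (hδ₃ : -(σ + 2) / (p - 1) < 0)
    (hε₁ : 0 < ε) (hε₂ : ε < (δ * (2 - (N : ℝ) - k - δ)) ^ (1 / (p - 1))) :
    ∀ x : Euc N, 1 ≤ ‖x‖ →
      lapl N (fun y => ε * ‖y‖ ^ δ) x
        + k * fderiv ℝ (fun y : Euc N => ε * ‖y‖ ^ δ) x ((‖x‖ ^ 2)⁻¹ • x)
        + ‖x‖ ^ σ * (ε * ‖x‖ ^ δ) ^ p ≤ 0 := by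
  intro x hx
  have hp : 0 < p - 1 := by
    by_contra! hp
    have : 0 ≤ -(σ + 2) / (p - 1) := div_nonneg_of_nonpos (by linarith) hp
    linarith
  have hδ : δ < 0 := hδ₂.trans hδ₃
  have hC : 0 ≤ δ * (2 - N - k - δ) := mul_nonneg_of_nonpos_of_nonpos hδ.le (by linarith)
  have hεp : ε ^ (p - 1) ≤ δ * (2 - N - k - δ) := by
    rw [one_div] at hε₂
    exact ((Real.lt_rpow_inv_iff_of_pos hε₁.le hC hp).mp hε₂).le
  have hexp : σ + δ * p ≤ δ - 2 := by
    have := (lt_div_iff₀ hp).mp hδ₂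
    linarith
  have hx0 : x ≠ 0 := norm_pos_iff.mp (one_pos.trans_le hx)
  rw [lapl_const_mul_norm_rpow N ε δ hx0, fderiv_const_mul_norm_rpow_apply_radial ε δ hx0]
  exact radial_power_source_absorbed hx hε₁ hexp hεp

/-- For `k > 2 − N`, `σ > −2`, `p > 1 + (σ+2)/(N+k−2)` supercritical, suitable `δ` and
small `ε > 0`, the function `u(x) = ε |x|^δ` is a positive stationary supersolution:
`Δu + k (x/|x|²)·∇u + |x|^σ u^p ≤ 0` on the exterior of the unit ball. -/
theorem stationary_supersolution_supercritical (N : ℕ) (hN : 2 ≤ N) (k σ p δ ε : ℝ)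
    (hk : 2 - (N : ℝ) < k) (hσ : -2 < σ) (hp : 1 + (σ + 2) / ((N : ℝ) + k - 2) < p)
    (hδ₁ : 2 - (N : ℝ) - k < δ) (hδ₂ : δ < -(σ + 2) / (p - 1))
    (hδ₃ : -(σ + 2) / (p - 1) < 0)
    (hε₁ : 0 < ε) (hε₂ : ε < (δ * (2 - (N : ℝ) - k - δ)) ^ (1 / (p - 1))) :
    ∀ x : Euc N, 1 ≤ ‖x‖ →
      lapl N (fun y => ε * ‖y‖ ^ δ) x
        + k * fderiv ℝ (fun y : Euc N => ε * ‖y‖ ^ δ) x ((‖x‖ ^ 2)⁻¹ • x)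
        + ‖x‖ ^ σ * (ε * ‖x‖ ^ δ) ^ p ≤ 0 :=
  stationary_supersolution_supercritical_general N k σ p δ ε hσ hδ₁ hδ₂ hδ₃ hε₁ hε₂
end
end
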